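/- arXiv:1403.0700 — 2 statements merged into one kernel-verified Lean document; each statement's English description precedes it below -/
import Mathlib

section
/- For symmetric positive definite matrices X, Y and any invertible matrix M, the symmetrized Stein divergence is affine invariant: J(MᵀXM, MᵀYM) = J(X,Y), where J(X,Y) = log det((X+Y)/2) − (1/2) log det(XY). -/
open Matrix

/-- Apply a scalar function spectrally to a (Hermitian) matrix:
`matFun f X = U * diagonal (f ∘ eigenvalues) * Uᴴ` using the spectral decomposition. -/
noncomputable def matFun {d : ℕ} (f : ℝ → ℝ) (X : Matrix (Fin d) (Fin d) ℝ) :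
    Matrix (Fin d) (Fin d) ℝ :=
  if h : X.IsHermitian then
    (h.eigenvectorUnitary : Matrix (Fin d) (Fin d) ℝ) * Matrix.diagonal (f ∘ h.eigenvalues) *
      star (h.eigenvectorUnitary : Matrix (Fin d) (Fin d) ℝ)
  else 0

/-- Spectral matrix logarithm. -/
noncomputable def mlog {d : ℕ} : Matrix (Fin d) (Fin d) ℝ → Matrix (Fin d) (Fin d) ℝ :=
  matFun Real.log

/-- Spectral matrix real power. -/
noncomputable def mpow {d : ℕ} (c : ℝ) : Matrix (Fin d) (Fin d) ℝ → Matrix (Fin d) (Fin d) ℝ :=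
  matFun (fun t => t ^ c)

/-- Spectral (SPD) matrix square root. -/
noncomputable def msqrt {d : ℕ} : Matrix (Fin d) (Fin d) ℝ → Matrix (Fin d) (Fin d) ℝ :=
  matFun Real.sqrt

/-- Inverse of the SPD square root. -/
noncomputable def minvsqrt {d : ℕ} (X : Matrix (Fin d) (Fin d) ℝ) : Matrix (Fin d) (Fin d) ℝ :=
  (msqrt X)⁻¹

/-- Affine invariant Riemannian distance on SPD matrices. -/
noncomputable def dg {d : ℕ} (X Y : Matrix (Fin d) (Fin d) ℝ) : ℝ :=
  Real.sqrt (((mlog (minvsqrt X * Y * minvsqrt X)) ^ 2).trace)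

/-- Manifold logarithm map at base point `A`. -/
noncomputable def logMap {d : ℕ} (A B : Matrix (Fin d) (Fin d) ℝ) : Matrix (Fin d) (Fin d) ℝ :=
  msqrt A * mlog (minvsqrt A * B * minvsqrt A) * msqrt A

/-- Manifold exponential map at base point `A`. -/
noncomputable def expMap {d : ℕ} (A Y : Matrix (Fin d) (Fin d) ℝ) : Matrix (Fin d) (Fin d) ℝ :=
  msqrt A * NormedSpace.exp (minvsqrt A * Y * minvsqrt A) * msqrt A

/-- Symmetrized Stein divergence. -/
noncomputable def steinDiv {d : ℕ} (X Y : Matrix (Fin d) (Fin d) ℝ) : ℝ :=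
  Real.log ((((1 : ℝ) / 2) • (X + Y)).det) - (1 / 2) * Real.log ((X * Y).det)

/-!
The determinant is multiplicative and `det Mᵀ = det M`, so a congruence by `M` multiplies
`det ((X + Y) / 2)` by `(det M)²` and `det (X Y)` by `(det M)⁴`; after taking logarithms the two
`2 log (det M)` shifts cancel in `log det ((X + Y) / 2) - ½ log det (X Y)`.
-/

theorem Matrix.det_transpose_mul_mul {n R : Type*} [Fintype n] [DecidableEq n] [CommRing R]
    (A M : Matrix n n R) : (Mᵀ * A * M).det = M.det ^ 2 * A.det := by
  rw [det_mul, det_mul, det_transpose]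
  ring

theorem Real.log_det_transpose_mul_mul {n : Type*} [Fintype n] [DecidableEq n]
    {A M : Matrix n n ℝ} (hM : M.det ≠ 0) (hA : A.det ≠ 0) :
    Real.log (Mᵀ * A * M).det = 2 * Real.log M.det + Real.log A.det := by
  rw [det_transpose_mul_mul, Real.log_mul (pow_ne_zero 2 hM) hA, Real.log_pow, Nat.cast_ofNat]

theorem steinDiv_transpose_mul_mul {d : ℕ} {X Y M : Matrix (Fin d) (Fin d) ℝ}
    (hM : M.det ≠ 0) (hX : X.det ≠ 0) (hY : Y.det ≠ 0)
    (hXY : (((1 : ℝ) / 2) • (X + Y)).det ≠ 0) :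
    steinDiv (Mᵀ * X * M) (Mᵀ * Y * M) = steinDiv X Y := by
  have hmid :
      ((1 : ℝ) / 2) • (Mᵀ * X * M + Mᵀ * Y * M) = Mᵀ * (((1 : ℝ) / 2) • (X + Y)) * M := by
    rw [Matrix.mul_smul, Matrix.smul_mul, Matrix.mul_add, Matrix.add_mul]
  have hcongr {A : Matrix (Fin d) (Fin d) ℝ} (hA : A.det ≠ 0) : (Mᵀ * A * M).det ≠ 0 := by
    rw [det_transpose_mul_mul]
    exact mul_ne_zero (pow_ne_zero 2 hM) hA
  unfold steinDiv
  rw [hmid, det_mul (Mᵀ * X * M), det_mul X, Real.log_mul (hcongr hX) (hcongr hY),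
    Real.log_mul hX hY, Real.log_det_transpose_mul_mul hM hXY, Real.log_det_transpose_mul_mul hM hX,
    Real.log_det_transpose_mul_mul hM hY]
  ring

theorem stmt6 {d : ℕ} (X Y M : Matrix (Fin d) (Fin d) ℝ) (hX : X.PosDef) (hY : Y.PosDef)
    (hM : IsUnit M.det) :
    steinDiv (Mᵀ * X * M) (Mᵀ * Y * M) = steinDiv X Y := by
  have hXY : (((1 : ℝ) / 2) • (X + Y)).det ≠ 0 := by
    rw [det_smul]
    exact mul_ne_zero (by positivity) (hX.add_posSemidef hY.posSemidef).det_pos.ne'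
  exact steinDiv_transpose_mul_mul hM.ne_zero hX.det_pos.ne' hY.det_pos.ne' hXY
end

section
/- For SPD matrices X, Y, the determinant inequality det((X+Y)/2) ≥ sqrt(det X · det Y) holds, with equality if and only if X = Y. -/
open Matrix

/-!
Both sides scale by `det B ^ 2` under a congruence `A ↦ Bᵀ A B`. Writing `X = Bᵀ B` and
`Y = Bᵀ Z B` reduces the claim to `X = 1`, where, in terms of the eigenvalues `λᵢ > 0` of `Z`, it
reads `∏ √λᵢ ≤ ∏ (1 + λᵢ) / 2`: the scalar AM–GM inequality, strict unless every `λᵢ = 1`,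
i.e. unless `Z = 1`.
-/

namespace Real

lemma sqrt_le_half_one_add {t : ℝ} (ht : 0 ≤ t) : √t ≤ 1 / 2 * (1 + t) := by
  nlinarith [sq_nonneg (√t - 1), sq_sqrt ht]

lemma sqrt_lt_half_one_add {t : ℝ} (ht : 0 ≤ t) (h1 : t ≠ 1) : √t < 1 / 2 * (1 + t) := by
  have hs : √t - 1 ≠ 0 := by rwa [sub_ne_zero, ne_eq, sqrt_eq_one]
  nlinarith [sq_sqrt ht, sq_pos_of_ne_zero hs]

lemma prod_sqrt_le_prod_half_one_add {ι : Type*} (s : Finset ι) {t : ι → ℝ}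
    (ht : ∀ i ∈ s, 0 ≤ t i) : ∏ i ∈ s, √(t i) ≤ ∏ i ∈ s, 1 / 2 * (1 + t i) :=
  Finset.prod_le_prod (fun _ _ ↦ sqrt_nonneg _) fun i hi ↦ sqrt_le_half_one_add (ht i hi)

lemma prod_half_one_add_eq_prod_sqrt_iff {ι : Type*} (s : Finset ι) {t : ι → ℝ}
    (ht : ∀ i ∈ s, 0 < t i) :
    ∏ i ∈ s, 1 / 2 * (1 + t i) = ∏ i ∈ s, √(t i) ↔ ∀ i ∈ s, t i = 1 := by
  refine ⟨fun h ↦ ?_, fun h ↦ Finset.prod_congr rfl fun i hi ↦ by norm_num [h i hi]⟩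
  by_contra! ⟨j, hj, hj1⟩
  exact (Finset.prod_lt_prod (fun i hi ↦ sqrt_pos.mpr (ht i hi))
    (fun i hi ↦ sqrt_le_half_one_add (ht i hi).le)
    ⟨j, hj, sqrt_lt_half_one_add (ht j hj).le hj1⟩).ne' h

end Real

namespace Matrix

variable {n : Type*} [Fintype n] [DecidableEq n]

theorem IsHermitian.det_cfc {𝕜 : Type*} [RCLike 𝕜] {A : Matrix n n 𝕜} (hA : A.IsHermitian)
    (f : ℝ → ℝ) : (cfc f A).det = ∏ i, (f (hA.eigenvalues i) : 𝕜) := by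
  simp [hA.cfc_eq, IsHermitian.cfc, -Unitary.conjStarAlgAut_apply]

theorem IsHermitian.eq_one_of_eigenvalues_eq_one {𝕜 : Type*} [RCLike 𝕜] {A : Matrix n n 𝕜}
    (hA : A.IsHermitian) (h : ∀ i, hA.eigenvalues i = 1) : A = 1 := by
  rw [← cfc_id ℝ A, ← cfc_one ℝ A]
  refine cfc_congr ?_
  rw [hA.spectrum_real_eq_range_eigenvalues]
  rintro _ ⟨i, rfl⟩
  exact h i

theorem IsHermitian.det_half_one_add {A : Matrix n n ℝ} (hA : A.IsHermitian) :
    ((1 / 2 : ℝ) • (1 + A)).det = ∏ i, 1 / 2 * (1 + hA.eigenvalues i) := by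
  have := hA.isSelfAdjoint
  have hcfc : (1 / 2 : ℝ) • (1 + A) = cfc (fun t : ℝ ↦ 1 / 2 * (1 + t)) A := by
    rw [cfc_const_mul _ (fun t ↦ 1 + t) A, cfc_const_add 1 (fun t ↦ t) A, cfc_id' ℝ A, map_one]
  rw [hcfc, hA.det_cfc]
  rfl

theorem PosDef.sqrt_det_eq_prod {A : Matrix n n ℝ} (hA : A.PosDef) :
    √A.det = ∏ i, √(hA.1.eigenvalues i) := by
  rw [hA.1.det_eq_prod_eigenvalues]
  exact Real.sqrt_prod _ fun i _ ↦ (hA.eigenvalues_pos i).le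

theorem PosDef.sqrt_det_le_det_half_one_add {A : Matrix n n ℝ} (hA : A.PosDef) :
    √A.det ≤ ((1 / 2 : ℝ) • (1 + A)).det := by
  rw [hA.sqrt_det_eq_prod, hA.1.det_half_one_add]
  exact Real.prod_sqrt_le_prod_half_one_add _ fun i _ ↦ (hA.eigenvalues_pos i).le

theorem PosDef.det_half_one_add_eq_sqrt_det_iff {A : Matrix n n ℝ} (hA : A.PosDef) :
    ((1 / 2 : ℝ) • (1 + A)).det = √A.det ↔ A = 1 := by
  refine ⟨fun h ↦ ?_, fun hA1 ↦ by rw [hA1, ← two_smul ℝ, smul_smul]; norm_num⟩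
  rw [hA.sqrt_det_eq_prod, hA.1.det_half_one_add,
    Real.prod_half_one_add_eq_prod_sqrt_iff _ fun i _ ↦ hA.eigenvalues_pos i] at h
  exact hA.1.eq_one_of_eigenvalues_eq_one fun i ↦ h i (Finset.mem_univ i)

theorem det_star_mul_mul (B A : Matrix n n ℝ) : (star B * A * B).det = B.det ^ 2 * A.det := by
  rw [det_mul, det_mul, star_eq_conjTranspose, det_conjTranspose, star_trivial]
  ring

open scoped MatrixOrder Matrix.Norms.L2Operator in
theorem PosDef.exists_eq_star_mul_self_and_star_conj {X Y : Matrix n n ℝ} (hX : X.PosDef)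
    (hY : Y.PosDef) :
    ∃ B Z : Matrix n n ℝ, IsUnit B ∧ Z.PosDef ∧ X = star B * B ∧ Y = star B * Z * B := by
  obtain ⟨B, hB, rfl⟩ :=
    CStarAlgebra.isStrictlyPositive_iff_eq_star_mul_self.mp hX.isStrictlyPositive
  have hBinv := B.nonsing_inv_mul ((isUnit_iff_isUnit_det B).mp hB)
  refine ⟨B, star B⁻¹ * Y * B⁻¹, hB,
    (IsUnit.posDef_star_left_conjugate_iff (isUnit_nonsing_inv_iff.mpr hB)).mpr hY, rfl, ?_⟩
  rw [← mul_assoc, ← mul_assoc, ← star_mul, hBinv, star_one, one_mul, mul_assoc, hBinv, mul_one]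

end Matrix

theorem stmt19 {d : ℕ} (X Y : Matrix (Fin d) (Fin d) ℝ) (hX : X.PosDef) (hY : Y.PosDef) :
    Real.sqrt (X.det * Y.det) ≤ (((1 : ℝ) / 2) • (X + Y)).det ∧
      ((((1 : ℝ) / 2) • (X + Y)).det = Real.sqrt (X.det * Y.det) ↔ X = Y) := by
  obtain ⟨B, Z, hB, hZ, rfl, rfl⟩ := hX.exists_eq_star_mul_self_and_star_conj hY
  have hB2 : 0 < B.det ^ 2 := sq_pos_of_ne_zero ((isUnit_iff_isUnit_det B).mp hB).ne_zero
  have hmean : (1 / 2 : ℝ) • (star B * B + star B * Z * B) =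
      star B * ((1 / 2 : ℝ) • (1 + Z)) * B := by
    simp [mul_add, add_mul]
  have hgeo : √((star B * B).det * (star B * Z * B).det) = B.det ^ 2 * √Z.det := by
    have hBB : (star B * B).det = B.det ^ 2 := by simpa using det_star_mul_mul B 1
    rw [hBB, det_star_mul_mul, ← mul_assoc, ← sq, Real.sqrt_mul (by positivity),
      Real.sqrt_sq hB2.le]
  rw [hmean, hgeo, det_star_mul_mul, mul_right_inj' hB2.ne',
    hZ.det_half_one_add_eq_sqrt_det_iff]
  refine ⟨mul_le_mul_of_nonneg_left hZ.sqrt_det_le_det_half_one_add hB2.le, ?_⟩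
  nth_rw 1 [← mul_one (star B)]
  rw [hB.mul_left_inj, hB.star.mul_right_inj, eq_comm]
end
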